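/- Let Q be a finite simple graph with n vertices and m edges. Then for all 1 ≤ p ≤ r and 1 ≤ q ≤ s, the first Zagreb index of the transformation graph Q_{rs}^{x(p) y(q) −} equals {p(1−s)² + (r−p)(s+1)² + 2q(nr−2r−2) + 2(q−s)(m+r(n−2)+1)}·M1(Q) + 2s·M2(Q) + s·F(Q) + (r−p)·{n(n+sm−1)² − 4m(n+sm−1)(s+1)} + p·s·m²·(ns+4(1−s)) + m·q·(nr−2r−2)² + m·(s−q)·(m+r(n−2)+1)². -/

import Mathlib

/-- Classical `Fintype` instance for neighbor sets of graphs on finite types. -/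
noncomputable instance fintypeNeighborSetOfFinite {W : Type*} [Finite W]
    (G : SimpleGraph W) (v : W) : Fintype (G.neighborSet v) :=
  Fintype.ofFinite _

/-- Classical `Fintype` instance for the edge set of a graph on a finite type. -/
noncomputable instance fintypeEdgeSetOfFinite {W : Type*} [Finite W]
    (G : SimpleGraph W) : Fintype G.edgeSet :=
  Fintype.ofFinite _

/-- The first Zagreb index `M₁(G) = Σ_v d(v)²`. -/
noncomputable def zagrebM1 {W : Type*} [Fintype W] (G : SimpleGraph W) : ℕ :=
  ∑ v, G.degree v ^ 2

/-- The second Zagreb index `M₂(G) = Σ_{uv ∈ E(G)} d(u)·d(v)`. -/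
noncomputable def zagrebM2 {W : Type*} [Fintype W] (G : SimpleGraph W) : ℕ :=
  ∑ e ∈ G.edgeFinset,
    Sym2.lift ⟨fun u v => G.degree u * G.degree v, fun u v => Nat.mul_comm (G.degree u) (G.degree v)⟩ e

/-- The forgotten index `F(G) = Σ_v d(v)³`. -/
noncomputable def forgottenF {W : Type*} [Fintype W] (G : SimpleGraph W) : ℕ :=
  ∑ v, G.degree v ^ 3

/-- The `(r,s)`-generalised transformation graph `Q_{rs}^{x(p) y(q) -}`.
Its vertices are `r` copies of `V(Q)` (indexed by `Fin r`) together with `s`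
copies of `E(Q)` (indexed by `Fin s`).  The copy `V_g` carries the adjacency of
`Q` when `g < p` and that of the complement when `g ≥ p`; the copy `E_h`
carries line-graph adjacency (sharing an endpoint) when `h < q` and its
complement when `h ≥ q`; a vertex-copy vertex and an edge-copy vertex are
adjacent iff the vertex is NOT incident with the edge in `Q`. -/
def genTransMinus {V : Type*} (Q : SimpleGraph V) (r s p q : ℕ) :
    SimpleGraph ((Fin r × V) ⊕ (Fin s × Q.edgeSet)) :=
  SimpleGraph.fromRel (fun a b =>
    match a, b with
    | Sum.inl (g, α), Sum.inl (g', β) =>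
        g = g' ∧ (((g : ℕ) < p ∧ Q.Adj α β) ∨ (¬ (g : ℕ) < p ∧ ¬ Q.Adj α β))
    | Sum.inr (h, e), Sum.inr (h', f) =>
        h = h' ∧ (((h : ℕ) < q ∧ ∃ w, w ∈ (e : Sym2 V) ∧ w ∈ (f : Sym2 V)) ∨
                  (¬ (h : ℕ) < q ∧ ¬ ∃ w, w ∈ (e : Sym2 V) ∧ w ∈ (f : Sym2 V)))
    | Sum.inl (_, α), Sum.inr (_, e) => α ∉ (e : Sym2 V)
    | Sum.inr (_, e), Sum.inl (_, α) => α ∉ (e : Sym2 V))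

open Finset SimpleGraph

namespace ZagrebAux

variable {V : Type*} [Fintype V] (Q : SimpleGraph V)

/-- double counting over edges -/
lemma sum_lift_add (f : V → ℤ) :
    ∑ e ∈ Q.edgeFinset,
      Sym2.lift ⟨fun u v => f u + f v, fun u v => add_comm _ _⟩ e
      = ∑ v, (Q.degree v : ℤ) * f v := by
  classical
  have h1 : ∀ e ∈ Q.edgeFinset,
      Sym2.lift ⟨fun u v => f u + f v, fun u v => add_comm _ _⟩ e
        = ∑ w ∈ univ.filter (· ∈ e), f w := by
    intro e he
    induction e with
    | _ u v =>
      have hadj : Q.Adj u v := by simpa [SimpleGraph.mem_edgeFinset] using he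
      have hf : univ.filter (· ∈ (s(u,v) : Sym2 V)) = {u, v} := by
        ext w; simp [Sym2.mem_iff]
      rw [hf, Finset.sum_pair hadj.ne, Sym2.lift_mk]
  rw [Finset.sum_congr rfl h1]
  simp only [Finset.sum_filter]
  rw [Finset.sum_comm]
  refine Finset.sum_congr rfl fun v _ => ?_
  rw [← Finset.sum_filter, ← incidenceFinset_eq_filter, Finset.sum_const,
    card_incidenceFinset_eq_degree, nsmul_eq_mul]

lemma card_mem_edge [DecidableEq V] (α : V) :
    (Q.edgeFinset.filter (fun e => α ∈ e)).card = Q.degree α := by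
  rw [← incidenceFinset_eq_filter, card_incidenceFinset_eq_degree]

lemma card_not_mem_edge [DecidableEq V] (α : V) :
    (Q.edgeFinset.filter (fun e => α ∉ e)).card + Q.degree α = Q.edgeFinset.card := by
  rw [← card_mem_edge Q α, add_comm]
  exact Finset.card_filter_add_card_filter_not _

lemma card_nonadj [DecidableEq V] [DecidableRel Q.Adj] (α : V) :
    (univ.filter (fun β => α ≠ β ∧ ¬ Q.Adj α β)).card + Q.degree α + 1
      = Fintype.card V := by
  classical
  have h1 : univ.filter (fun β => ¬ (α ≠ β ∧ ¬ Q.Adj α β))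
      = insert α (Q.neighborFinset α) := by
    ext β
    simp only [Finset.mem_filter, Finset.mem_univ, true_and, Finset.mem_insert,
      mem_neighborFinset, not_and, not_not, ne_eq]
    constructor
    · intro h
      by_cases hb : α = β
      · exact Or.inl hb.symm
      · exact Or.inr (h hb)
    · rintro (rfl | h)
      · intro h'; exact absurd rfl h'
      · intro _; exact h
  have h2 := Finset.card_filter_add_card_filter_not
    (s := (univ : Finset V)) (p := fun β => α ≠ β ∧ ¬ Q.Adj α β)
  rw [h1, Finset.card_insert_of_notMem (by simp), Finset.card_univ,
    card_neighborFinset_eq_degree] at h2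
  omega

lemma card_mem_pair [DecidableEq V] {u v : V} (huv : u ≠ v) :
    (univ.filter (fun w => w ∈ (s(u,v) : Sym2 V))).card = 2 := by
  have hf : univ.filter (fun w => w ∈ (s(u,v) : Sym2 V)) = {u, v} := by
    ext w; simp [Sym2.mem_iff]
  rw [hf, Finset.card_pair huv]

lemma card_shared [DecidableEq V] {u v : V} (huv : Q.Adj u v) :
    (Q.edgeFinset.filter
        (fun f => ∃ w, w ∈ (s(u,v) : Sym2 V) ∧ w ∈ f)).card + 1
      = Q.degree u + Q.degree v := by
  have h1 : Q.edgeFinset.filter (fun f => ∃ w, w ∈ (s(u,v) : Sym2 V) ∧ w ∈ f)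
      = Q.edgeFinset.filter (fun f => u ∈ f) ∪ Q.edgeFinset.filter (fun f => v ∈ f) := by
    ext f
    simp only [Finset.mem_filter, Finset.mem_union, Sym2.mem_iff]
    constructor
    · rintro ⟨hf, w, (rfl | rfl), hw⟩
      · exact Or.inl ⟨hf, hw⟩
      · exact Or.inr ⟨hf, hw⟩
    · rintro (⟨hf, hw⟩ | ⟨hf, hw⟩)
      · exact ⟨hf, u, Or.inl rfl, hw⟩
      · exact ⟨hf, v, Or.inr rfl, hw⟩
  have h2 : Q.edgeFinset.filter (fun f => u ∈ f) ∩ Q.edgeFinset.filter (fun f => v ∈ f)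
      = {s(u,v)} := by
    ext f
    simp only [Finset.mem_inter, Finset.mem_filter, Finset.mem_singleton]
    constructor
    · rintro ⟨⟨hf, hu⟩, _, hv⟩
      exact (Sym2.mem_and_mem_iff huv.ne).mp ⟨hu, hv⟩
    · rintro rfl
      refine ⟨⟨?_, ?_⟩, ?_, ?_⟩ <;> simp [SimpleGraph.mem_edgeFinset, huv]
  have h3 := Finset.card_union_add_card_inter
    (Q.edgeFinset.filter (fun f => u ∈ f)) (Q.edgeFinset.filter (fun f => v ∈ f))
  rw [h2, Finset.card_singleton, card_mem_edge, card_mem_edge] at h3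
  rw [h1]
  omega

variable {r s p q : ℕ}

lemma adj_inl_inl {g g' : Fin r} {α β : V} :
    (genTransMinus Q r s p q).Adj (Sum.inl (g, α)) (Sum.inl (g', β)) ↔
      g = g' ∧ (((g : ℕ) < p ∧ Q.Adj α β) ∨
        (¬ (g : ℕ) < p ∧ α ≠ β ∧ ¬ Q.Adj α β)) := by
  rw [genTransMinus, SimpleGraph.fromRel_adj]
  constructor
  · rintro ⟨hne, hrel⟩
    have hgg : g = g' := by
      rcases hrel with ⟨h, _⟩ | ⟨h, _⟩
      · exact h
      · exact h.symm
    subst hgg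
    have hab : α ≠ β := fun h => hne (by rw [h])
    rcases hrel with ⟨_, ⟨h1, h2⟩ | ⟨h1, h2⟩⟩ | ⟨_, ⟨h1, h2⟩ | ⟨h1, h2⟩⟩
    · exact ⟨rfl, Or.inl ⟨h1, h2⟩⟩
    · exact ⟨rfl, Or.inr ⟨h1, hab, h2⟩⟩
    · exact ⟨rfl, Or.inl ⟨h1, h2.symm⟩⟩
    · exact ⟨rfl, Or.inr ⟨h1, hab, fun ha => h2 ha.symm⟩⟩
  · rintro ⟨rfl, ⟨h1, h2⟩ | ⟨h1, h2, h3⟩⟩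
    · exact ⟨by simp [h2.ne], Or.inl ⟨rfl, Or.inl ⟨h1, h2⟩⟩⟩
    · exact ⟨by simp [h2], Or.inl ⟨rfl, Or.inr ⟨h1, h3⟩⟩⟩

lemma adj_inl_inr {g : Fin r} {h : Fin s} {α : V} {e : Q.edgeSet} :
    (genTransMinus Q r s p q).Adj (Sum.inl (g, α)) (Sum.inr (h, e)) ↔
      α ∉ (e : Sym2 V) := by
  rw [genTransMinus, SimpleGraph.fromRel_adj]
  constructor
  · rintro ⟨-, h | h⟩ <;> exact h
  · intro hα
    exact ⟨by simp, Or.inl hα⟩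

lemma adj_inr_inl {g : Fin r} {h : Fin s} {α : V} {e : Q.edgeSet} :
    (genTransMinus Q r s p q).Adj (Sum.inr (h, e)) (Sum.inl (g, α)) ↔
      α ∉ (e : Sym2 V) := by
  rw [SimpleGraph.adj_comm]
  exact adj_inl_inr Q

lemma adj_inr_inr {h h' : Fin s} {e f : Q.edgeSet} :
    (genTransMinus Q r s p q).Adj (Sum.inr (h, e)) (Sum.inr (h', f)) ↔
      h = h' ∧ ((((h : ℕ) < q ∧ e ≠ f ∧ ∃ w, w ∈ (e : Sym2 V) ∧ w ∈ (f : Sym2 V)) ∨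
        (¬ (h : ℕ) < q ∧ e ≠ f ∧ ¬ ∃ w, w ∈ (e : Sym2 V) ∧ w ∈ (f : Sym2 V)))) := by
  rw [genTransMinus, SimpleGraph.fromRel_adj]
  have hswap : (∃ w, w ∈ (f : Sym2 V) ∧ w ∈ (e : Sym2 V)) ↔
      (∃ w, w ∈ (e : Sym2 V) ∧ w ∈ (f : Sym2 V)) := by
    constructor <;> rintro ⟨w, hw1, hw2⟩ <;> exact ⟨w, hw2, hw1⟩
  constructor
  · rintro ⟨hne, hrel⟩
    have hhh : h = h' := by
      rcases hrel with ⟨h, _⟩ | ⟨h, _⟩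
      · exact h
      · exact h.symm
    subst hhh
    have hef : e ≠ f := fun hh => hne (by rw [hh])
    rcases hrel with ⟨_, ⟨h1, h2⟩ | ⟨h1, h2⟩⟩ | ⟨_, ⟨h1, h2⟩ | ⟨h1, h2⟩⟩
    · exact ⟨rfl, Or.inl ⟨h1, hef, h2⟩⟩
    · exact ⟨rfl, Or.inr ⟨h1, hef, h2⟩⟩
    · exact ⟨rfl, Or.inl ⟨h1, hef, hswap.mp h2⟩⟩
    · exact ⟨rfl, Or.inr ⟨h1, hef, fun hc => h2 (hswap.mpr hc)⟩⟩
  · rintro ⟨rfl, ⟨h1, h2, h3⟩ | ⟨h1, h2, h3⟩⟩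
    · exact ⟨by simp [h2], Or.inl ⟨rfl, Or.inl ⟨h1, h3⟩⟩⟩
    · exact ⟨by simp [h2], Or.inl ⟨rfl, Or.inr ⟨h1, h3⟩⟩⟩

lemma sum_sum_ite_eq {k : ℕ} {β : Type*} [Fintype β] (c : Fin k) (P : β → Prop)
    [DecidablePred P] :
    ∑ x : Fin k, ∑ y : β, (if c = x ∧ P y then (1 : ℕ) else 0)
      = (univ.filter P).card := by
  rw [Finset.sum_comm, Finset.card_filter]
  refine Finset.sum_congr rfl fun y _ => ?_
  simp only [ite_and]
  rw [Finset.sum_ite_eq]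
  simp

lemma degree_eq_sum {W : Type*} [Fintype W] (G : SimpleGraph W) (x : W)
    [DecidableRel G.Adj] :
    G.degree x = ∑ y : W, if G.Adj x y then (1:ℕ) else 0 := by
  rw [← card_neighborFinset_eq_degree,
    show G.neighborFinset x = univ.filter (G.Adj x) by ext y; simp]
  exact Finset.card_filter _ _

lemma degree_inl_lt {g : Fin r} (hg : (g : ℕ) < p) (α : V) :
    (genTransMinus Q r s p q).degree (Sum.inl (g, α))
      = Q.degree α + s * (Q.edgeFinset.card - Q.degree α) := by
  classical
  rw [degree_eq_sum, Fintype.sum_sum_type]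
  have h1 : ∑ a : Fin r × V,
      (if (genTransMinus Q r s p q).Adj (Sum.inl (g, α)) (Sum.inl a) then (1:ℕ) else 0)
        = Q.degree α := by
    rw [Fintype.sum_prod_type]
    have hiff : ∀ (g' : Fin r) (β : V),
        (genTransMinus Q r s p q).Adj (Sum.inl (g, α)) (Sum.inl (g', β))
          ↔ (g = g' ∧ Q.Adj α β) := by
      intro g' β; rw [adj_inl_inl]; simp [hg]
    simp only [hiff]
    rw [sum_sum_ite_eq g (fun β => Q.Adj α β), Finset.card_filter]
    exact (degree_eq_sum Q α).symm
  have h2 : ∑ b : Fin s × Q.edgeSet,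
      (if (genTransMinus Q r s p q).Adj (Sum.inl (g, α)) (Sum.inr b) then (1:ℕ) else 0)
        = s * (Q.edgeFinset.card - Q.degree α) := by
    rw [Fintype.sum_prod_type]
    simp only [adj_inl_inr]
    rw [Finset.sum_const, Finset.card_univ, Fintype.card_fin, smul_eq_mul]
    congr 1
    rw [Finset.sum_set_coe (f := fun x : Sym2 V => if α ∉ x then (1:ℕ) else 0),
      show Q.edgeSet.toFinset = Q.edgeFinset from rfl, ← Finset.card_filter]
    have := card_not_mem_edge Q α
    omega
  rw [h1, h2]

lemma degree_inl_ge {g : Fin r} (hg : ¬ (g : ℕ) < p) (α : V) :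
    (genTransMinus Q r s p q).degree (Sum.inl (g, α))
      = (Fintype.card V - 1 - Q.degree α) + s * (Q.edgeFinset.card - Q.degree α) := by
  classical
  rw [degree_eq_sum, Fintype.sum_sum_type]
  have h1 : ∑ a : Fin r × V,
      (if (genTransMinus Q r s p q).Adj (Sum.inl (g, α)) (Sum.inl a) then (1:ℕ) else 0)
        = Fintype.card V - 1 - Q.degree α := by
    rw [Fintype.sum_prod_type]
    have hiff : ∀ (g' : Fin r) (β : V),
        (genTransMinus Q r s p q).Adj (Sum.inl (g, α)) (Sum.inl (g', β))
          ↔ (g = g' ∧ (α ≠ β ∧ ¬ Q.Adj α β)) := by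
      intro g' β; rw [adj_inl_inl]; simp [hg]
    simp only [hiff]
    rw [sum_sum_ite_eq g (fun β => α ≠ β ∧ ¬ Q.Adj α β)]
    have := card_nonadj Q α
    omega
  have h2 : ∑ b : Fin s × Q.edgeSet,
      (if (genTransMinus Q r s p q).Adj (Sum.inl (g, α)) (Sum.inr b) then (1:ℕ) else 0)
        = s * (Q.edgeFinset.card - Q.degree α) := by
    rw [Fintype.sum_prod_type]
    simp only [adj_inl_inr]
    rw [Finset.sum_const, Finset.card_univ, Fintype.card_fin, smul_eq_mul]
    congr 1
    rw [Finset.sum_set_coe (f := fun x : Sym2 V => if α ∉ x then (1:ℕ) else 0),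
      show Q.edgeSet.toFinset = Q.edgeFinset from rfl, ← Finset.card_filter]
    have := card_not_mem_edge Q α
    omega
  rw [h1, h2]

lemma degree_inr_lt {h : Fin s} (hh : (h : ℕ) < q) {u v : V} (huv : Q.Adj u v)
    (hx : (s(u,v) : Sym2 V) ∈ Q.edgeSet) :
    (genTransMinus Q r s p q).degree (Sum.inr (h, ⟨s(u,v), hx⟩))
      = (Q.degree u + Q.degree v - 2) + r * (Fintype.card V - 2) := by
  classical
  set e : Q.edgeSet := ⟨s(u,v), hx⟩ with he
  rw [degree_eq_sum, Fintype.sum_sum_type]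
  have h1 : ∑ a : Fin r × V,
      (if (genTransMinus Q r s p q).Adj (Sum.inr (h, e)) (Sum.inl a) then (1:ℕ) else 0)
        = r * (Fintype.card V - 2) := by
    rw [Fintype.sum_prod_type]
    simp only [adj_inr_inl]
    rw [Finset.sum_const, Finset.card_univ, Fintype.card_fin, smul_eq_mul]
    congr 1
    rw [← Finset.card_filter]
    have hc := card_mem_pair (V := V) huv.ne
    have ht := Finset.card_filter_add_card_filter_not
      (s := (univ : Finset V)) (p := fun w => w ∈ (s(u,v) : Sym2 V))
    rw [Finset.card_univ] at ht
    have : (univ.filter (fun w => ¬ w ∈ (s(u,v) : Sym2 V))).card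
        = Fintype.card V - 2 := by omega
    rw [← this]
  have h2 : ∑ b : Fin s × Q.edgeSet,
      (if (genTransMinus Q r s p q).Adj (Sum.inr (h, e)) (Sum.inr b) then (1:ℕ) else 0)
        = Q.degree u + Q.degree v - 2 := by
    rw [Fintype.sum_prod_type]
    have hiff : ∀ (h' : Fin s) (f : Q.edgeSet),
        (genTransMinus Q r s p q).Adj (Sum.inr (h, e)) (Sum.inr (h', f))
          ↔ (h = h' ∧ ((s(u,v) : Sym2 V) ≠ (f : Sym2 V) ∧
              ∃ w, w ∈ (s(u,v) : Sym2 V) ∧ w ∈ (f : Sym2 V))) := by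
      intro h' f
      rw [adj_inr_inr]
      have : e ≠ f ↔ (s(u,v) : Sym2 V) ≠ (f : Sym2 V) := by
        rw [ne_eq, ne_eq, he, Subtype.ext_iff]
      simp [hh, this]
      intro _ _; simp [he]
    simp only [hiff]
    rw [sum_sum_ite_eq h
      (fun f : Q.edgeSet => (s(u,v) : Sym2 V) ≠ (f : Sym2 V) ∧
        ∃ w, w ∈ (s(u,v) : Sym2 V) ∧ w ∈ (f : Sym2 V))]
    rw [Finset.card_filter,
      Finset.sum_set_coe (f := fun x : Sym2 V =>
        if (s(u,v) : Sym2 V) ≠ x ∧ ∃ w, w ∈ (s(u,v) : Sym2 V) ∧ w ∈ x then (1:ℕ) else 0),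
      show Q.edgeSet.toFinset = Q.edgeFinset from rfl, ← Finset.card_filter]
    have hB : Q.edgeFinset.filter
        (fun x => (s(u,v) : Sym2 V) ≠ x ∧ ∃ w, w ∈ (s(u,v) : Sym2 V) ∧ w ∈ x)
        = (Q.edgeFinset.filter
            (fun x => ∃ w, w ∈ (s(u,v) : Sym2 V) ∧ w ∈ x)).erase (s(u,v) : Sym2 V) := by
      ext x
      simp only [Finset.mem_filter, Finset.mem_erase, ne_eq]
      constructor
      · rintro ⟨hx1, hx2, hx3⟩
        exact ⟨fun hc => hx2 hc.symm, hx1, hx3⟩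
      · rintro ⟨hx1, hx2, hx3⟩
        exact ⟨hx2, fun hc => hx1 hc.symm, hx3⟩
    rw [hB, Finset.card_erase_of_mem]
    · have := card_shared Q huv
      omega
    · rw [Finset.mem_filter]
      exact ⟨by simpa [SimpleGraph.mem_edgeFinset] using huv,
        u, Sym2.mem_mk_left u v, Sym2.mem_mk_left u v⟩
  rw [h1, h2]
  omega

lemma degree_inr_ge {h : Fin s} (hh : ¬ (h : ℕ) < q) {u v : V} (huv : Q.Adj u v)
    (hx : (s(u,v) : Sym2 V) ∈ Q.edgeSet) :
    (genTransMinus Q r s p q).degree (Sum.inr (h, ⟨s(u,v), hx⟩))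
      = (Q.edgeFinset.card + 1 - (Q.degree u + Q.degree v))
        + r * (Fintype.card V - 2) := by
  classical
  set e : Q.edgeSet := ⟨s(u,v), hx⟩ with he
  rw [degree_eq_sum, Fintype.sum_sum_type]
  have h1 : ∑ a : Fin r × V,
      (if (genTransMinus Q r s p q).Adj (Sum.inr (h, e)) (Sum.inl a) then (1:ℕ) else 0)
        = r * (Fintype.card V - 2) := by
    rw [Fintype.sum_prod_type]
    simp only [adj_inr_inl]
    rw [Finset.sum_const, Finset.card_univ, Fintype.card_fin, smul_eq_mul]
    congr 1
    rw [← Finset.card_filter]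
    have hc := card_mem_pair (V := V) huv.ne
    have ht := Finset.card_filter_add_card_filter_not
      (s := (univ : Finset V)) (p := fun w => w ∈ (s(u,v) : Sym2 V))
    rw [Finset.card_univ] at ht
    have : (univ.filter (fun w => ¬ w ∈ (s(u,v) : Sym2 V))).card
        = Fintype.card V - 2 := by omega
    rw [← this]
  have h2 : ∑ b : Fin s × Q.edgeSet,
      (if (genTransMinus Q r s p q).Adj (Sum.inr (h, e)) (Sum.inr b) then (1:ℕ) else 0)
        = Q.edgeFinset.card + 1 - (Q.degree u + Q.degree v) := by
    rw [Fintype.sum_prod_type]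
    have hiff : ∀ (h' : Fin s) (f : Q.edgeSet),
        (genTransMinus Q r s p q).Adj (Sum.inr (h, e)) (Sum.inr (h', f))
          ↔ (h = h' ∧ ((s(u,v) : Sym2 V) ≠ (f : Sym2 V) ∧
              ¬ ∃ w, w ∈ (s(u,v) : Sym2 V) ∧ w ∈ (f : Sym2 V))) := by
      intro h' f
      rw [adj_inr_inr]
      have : e ≠ f ↔ (s(u,v) : Sym2 V) ≠ (f : Sym2 V) := by
        rw [ne_eq, ne_eq, he, Subtype.ext_iff]
      simp [hh, this]
      intro _ _; simp [he]
    simp only [hiff]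
    rw [sum_sum_ite_eq h
      (fun f : Q.edgeSet => (s(u,v) : Sym2 V) ≠ (f : Sym2 V) ∧
        ¬ ∃ w, w ∈ (s(u,v) : Sym2 V) ∧ w ∈ (f : Sym2 V))]
    rw [Finset.card_filter,
      Finset.sum_set_coe (f := fun x : Sym2 V =>
        if (s(u,v) : Sym2 V) ≠ x ∧ ¬ ∃ w, w ∈ (s(u,v) : Sym2 V) ∧ w ∈ x then (1:ℕ) else 0),
      show Q.edgeSet.toFinset = Q.edgeFinset from rfl, ← Finset.card_filter]
    have hB : Q.edgeFinset.filter
        (fun x => (s(u,v) : Sym2 V) ≠ x ∧ ¬ ∃ w, w ∈ (s(u,v) : Sym2 V) ∧ w ∈ x)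
        = Q.edgeFinset.filter
            (fun x => ¬ ∃ w, w ∈ (s(u,v) : Sym2 V) ∧ w ∈ x) := by
      ext x
      simp only [Finset.mem_filter]
      constructor
      · rintro ⟨hx1, _, hx3⟩
        exact ⟨hx1, hx3⟩
      · rintro ⟨hx1, hx2⟩
        refine ⟨hx1, fun hc => hx2 ⟨u, Sym2.mem_mk_left u v, hc ▸ Sym2.mem_mk_left u v⟩, hx2⟩
    have ht := Finset.card_filter_add_card_filter_not
      (s := Q.edgeFinset) (p := fun x => ∃ w, w ∈ (s(u,v) : Sym2 V) ∧ w ∈ x)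
    have hs := card_shared Q huv
    rw [hB]
    omega
  rw [h1, h2]
  omega

noncomputable def dsum : Sym2 V → ℤ :=
  Sym2.lift ⟨fun u v => (Q.degree u : ℤ) + (Q.degree v : ℤ), fun u v => add_comm _ _⟩

@[simp] lemma dsum_mk (u v : V) :
    dsum Q s(u,v) = (Q.degree u : ℤ) + (Q.degree v : ℤ) := rfl

lemma degree_inl_lt_z {g : Fin r} (hg : (g : ℕ) < p) (α : V) :
    ((genTransMinus Q r s p q).degree (Sum.inl (g, α)) : ℤ)
      = (1 - (s : ℤ)) * (Q.degree α : ℤ) + (s : ℤ) * (Q.edgeFinset.card : ℤ) := by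
  classical
  have hdm : Q.degree α ≤ Q.edgeFinset.card := by
    have := card_not_mem_edge Q α; omega
  rw [degree_inl_lt Q hg α, Nat.cast_add, Nat.cast_mul,
    show ((Q.edgeFinset.card - Q.degree α : ℕ) : ℤ)
      = (Q.edgeFinset.card : ℤ) - Q.degree α by omega]
  ring

lemma degree_inl_ge_z {g : Fin r} (hg : ¬ (g : ℕ) < p) (α : V) :
    ((genTransMinus Q r s p q).degree (Sum.inl (g, α)) : ℤ)
      = (-(s : ℤ) - 1) * (Q.degree α : ℤ)
        + ((Fintype.card V : ℤ) - 1 + (s : ℤ) * (Q.edgeFinset.card : ℤ)) := by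
  classical
  have hdm : Q.degree α ≤ Q.edgeFinset.card := by
    have := card_not_mem_edge Q α; omega
  have hdn : Q.degree α + 1 ≤ Fintype.card V := by
    have := card_nonadj Q α; omega
  rw [degree_inl_ge Q hg α, Nat.cast_add, Nat.cast_mul,
    show ((Fintype.card V - 1 - Q.degree α : ℕ) : ℤ)
      = (Fintype.card V : ℤ) - 1 - Q.degree α by omega,
    show ((Q.edgeFinset.card - Q.degree α : ℕ) : ℤ)
      = (Q.edgeFinset.card : ℤ) - Q.degree α by omega]
  ring

lemma degree_inr_lt_z {h : Fin s} (hh : (h : ℕ) < q) (e : Q.edgeSet) :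
    ((genTransMinus Q r s p q).degree (Sum.inr (h, e)) : ℤ)
      = 1 * dsum Q (e : Sym2 V)
        + ((r : ℤ) * ((Fintype.card V : ℤ) - 2) - 2) := by
  classical
  obtain ⟨x, hx⟩ := e
  induction x using Sym2.ind with
  | _ u v =>
    have huv : Q.Adj u v := hx
    have hdu : 0 < Q.degree u := (Q.degree_pos_iff_exists_adj u).mpr ⟨v, huv⟩
    have hdv : 0 < Q.degree v := (Q.degree_pos_iff_exists_adj v).mpr ⟨u, huv.symm⟩
    have hn2 : 2 ≤ Fintype.card V :=
      Fintype.one_lt_card_iff.mpr ⟨u, v, huv.ne⟩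
    rw [degree_inr_lt Q hh huv hx, Nat.cast_add, Nat.cast_mul,
      show ((Q.degree u + Q.degree v - 2 : ℕ) : ℤ)
        = (Q.degree u : ℤ) + Q.degree v - 2 by omega,
      show ((Fintype.card V - 2 : ℕ) : ℤ) = (Fintype.card V : ℤ) - 2 by omega]
    show _ = 1 * dsum Q s(u,v) + _
    rw [dsum_mk]
    ring

lemma degree_inr_ge_z {h : Fin s} (hh : ¬ (h : ℕ) < q) (e : Q.edgeSet) :
    ((genTransMinus Q r s p q).degree (Sum.inr (h, e)) : ℤ)
      = (-1) * dsum Q (e : Sym2 V)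
        + ((Q.edgeFinset.card : ℤ) + 1 + (r : ℤ) * ((Fintype.card V : ℤ) - 2)) := by
  classical
  obtain ⟨x, hx⟩ := e
  induction x using Sym2.ind with
  | _ u v =>
    have huv : Q.Adj u v := hx
    have hn2 : 2 ≤ Fintype.card V :=
      Fintype.one_lt_card_iff.mpr ⟨u, v, huv.ne⟩
    have hdm : Q.degree u + Q.degree v ≤ Q.edgeFinset.card + 1 := by
      have h1 := card_shared Q huv
      have h2 := Finset.card_filter_le Q.edgeFinset
        (fun f => ∃ w, w ∈ (s(u,v) : Sym2 V) ∧ w ∈ f)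
      omega
    rw [degree_inr_ge Q hh huv hx, Nat.cast_add, Nat.cast_mul,
      show ((Q.edgeFinset.card + 1 - (Q.degree u + Q.degree v) : ℕ) : ℤ)
        = (Q.edgeFinset.card : ℤ) + 1 - (Q.degree u + Q.degree v) by omega,
      show ((Fintype.card V - 2 : ℕ) : ℤ) = (Fintype.card V : ℤ) - 2 by omega]
    show _ = (-1) * dsum Q s(u,v) + _
    rw [dsum_mk]
    ring

lemma fin_sum_ite (r' p' : ℕ) (hpr : p' ≤ r') (A B : ℤ) :
    ∑ g : Fin r', (if (g : ℕ) < p' then A else B)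
      = (p' : ℤ) * A + ((r' : ℤ) - p') * B := by
  rw [Fin.sum_univ_eq_sum_range (fun i => if i < p' then A else B) r',
    Finset.range_eq_Ico, ← Finset.sum_Ico_consecutive _ (Nat.zero_le p') hpr]
  have h1 : ∑ i ∈ Finset.Ico 0 p', (if i < p' then A else B) = (p' : ℤ) * A := by
    rw [Finset.sum_congr rfl (fun i hi => if_pos (Finset.mem_Ico.mp hi).2),
      Finset.sum_const, Nat.card_Ico, nsmul_eq_mul]
    simp
  have h2 : ∑ i ∈ Finset.Ico p' r', (if i < p' then A else B)
      = ((r' : ℤ) - p') * B := by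
    rw [Finset.sum_congr rfl
        (fun i hi => if_neg (by have := (Finset.mem_Ico.mp hi).1; omega)),
      Finset.sum_const, Nat.card_Ico, nsmul_eq_mul, Nat.cast_sub hpr]
  rw [h1, h2]

lemma sum_affine_sq (a b : ℤ) :
    ∑ α : V, (a * (Q.degree α : ℤ) + b)^2
      = a^2 * (∑ α, ((Q.degree α : ℤ))^2) + 2*a*b*(∑ α, (Q.degree α : ℤ))
        + (Fintype.card V : ℤ) * b^2 := by
  rw [Finset.sum_congr rfl (fun α (_ : α ∈ univ) => show (a * (Q.degree α:ℤ) + b)^2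
      = a^2 * ((Q.degree α:ℤ))^2 + (2*a*b) * (Q.degree α:ℤ) + b^2 by ring),
    Finset.sum_add_distrib, Finset.sum_add_distrib,
    ← Finset.mul_sum, ← Finset.mul_sum, Finset.sum_const, Finset.card_univ,
    nsmul_eq_mul]

lemma sum_affine_sq_edge (a b : ℤ) :
    ∑ e ∈ Q.edgeFinset, (a * dsum Q e + b)^2
      = a^2 * (∑ e ∈ Q.edgeFinset, (dsum Q e)^2)
        + 2*a*b*(∑ e ∈ Q.edgeFinset, dsum Q e)
        + (Q.edgeFinset.card : ℤ) * b^2 := by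
  rw [Finset.sum_congr rfl (fun e (_ : e ∈ Q.edgeFinset) => show (a * dsum Q e + b)^2
      = a^2 * (dsum Q e)^2 + (2*a*b) * dsum Q e + b^2 by ring),
    Finset.sum_add_distrib, Finset.sum_add_distrib,
    ← Finset.mul_sum, ← Finset.mul_sum, Finset.sum_const, nsmul_eq_mul]

lemma sum_dsum : ∑ e ∈ Q.edgeFinset, dsum Q e = ∑ v, ((Q.degree v : ℤ))^2 := by
  have h := sum_lift_add Q (fun v => (Q.degree v : ℤ))
  simpa [dsum, pow_two] using h

lemma sum_dsum_sq :
    ∑ e ∈ Q.edgeFinset, (dsum Q e)^2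
      = (∑ v, ((Q.degree v : ℤ))^3)
        + 2 * ∑ e ∈ Q.edgeFinset,
            Sym2.lift ⟨fun u v => (Q.degree u : ℤ) * (Q.degree v : ℤ),
              fun u v => mul_comm _ _⟩ e := by
  have h : ∀ e ∈ Q.edgeFinset, (dsum Q e)^2
      = Sym2.lift ⟨fun u v => ((Q.degree u : ℤ))^2 + ((Q.degree v : ℤ))^2,
          fun u v => add_comm _ _⟩ e
        + 2 * Sym2.lift ⟨fun u v => (Q.degree u : ℤ) * (Q.degree v : ℤ),
            fun u v => mul_comm _ _⟩ e := by
    intro e _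
    induction e using Sym2.ind with
    | _ u v => simp [dsum]; ring
  rw [Finset.sum_congr rfl h, Finset.sum_add_distrib, ← Finset.mul_sum]
  congr 1
  have h2 := sum_lift_add Q (fun v => ((Q.degree v : ℤ))^2)
  rw [h2]
  exact Finset.sum_congr rfl fun v _ => by ring

lemma m2_lift_cast (Gq : SimpleGraph V) :
    ∑ e ∈ Gq.edgeFinset,
        ((Sym2.lift ⟨fun u v => Gq.degree u * Gq.degree v,
          fun u v => Nat.mul_comm (Gq.degree u) (Gq.degree v)⟩ e : ℕ) : ℤ)
      = ∑ e ∈ Gq.edgeFinset,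
          Sym2.lift ⟨fun u v => (Gq.degree u : ℤ) * (Gq.degree v : ℤ),
            fun u v => mul_comm _ _⟩ e := by
  refine Finset.sum_congr rfl fun e _ => ?_
  induction e using Sym2.ind with
  | _ u v => simp

end ZagrebAux

open ZagrebAux

/-- First Zagreb index of `Q_{rs}^{x(p) y(q) -}` for `1 ≤ p ≤ r`, `1 ≤ q ≤ s`. -/
theorem zagrebM1_genTransMinus
    {V : Type*} [Fintype V] (Q : SimpleGraph V)
    (r s p q n m : ℕ) (hp1 : 1 ≤ p) (hpr : p ≤ r) (hq1 : 1 ≤ q) (hqs : q ≤ s)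
    (hn : Fintype.card V = n) (hm : Q.edgeFinset.card = m) :
    (zagrebM1 (genTransMinus Q r s p q) : ℤ) =
      ((p : ℤ) * (1 - (s : ℤ)) ^ 2 + ((r : ℤ) - p) * ((s : ℤ) + 1) ^ 2
          + 2 * q * ((n : ℤ) * r - 2 * r - 2)
          + 2 * ((q : ℤ) - s) * ((m : ℤ) + (r : ℤ) * ((n : ℤ) - 2) + 1))
        * zagrebM1 Q
      + 2 * s * zagrebM2 Q + s * forgottenF Q
      + ((r : ℤ) - p) * ((n : ℤ) * ((n : ℤ) + s * m - 1) ^ 2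
          - 4 * m * ((n : ℤ) + s * m - 1) * ((s : ℤ) + 1))
      + (p : ℤ) * s * (m : ℤ) ^ 2 * ((n : ℤ) * s + 4 * (1 - (s : ℤ)))
      + (m : ℤ) * q * ((n : ℤ) * r - 2 * r - 2) ^ 2
      + (m : ℤ) * ((s : ℤ) - q) * ((m : ℤ) + (r : ℤ) * ((n : ℤ) - 2) + 1) ^ 2 := by
  classical
  subst hn hm
  have hM1 : (zagrebM1 Q : ℤ) = ∑ v, ((Q.degree v : ℤ))^2 := by
    rw [zagrebM1]; push_cast; rfl
  have hF : (forgottenF Q : ℤ) = ∑ v, ((Q.degree v : ℤ))^3 := by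
    rw [forgottenF]; push_cast; rfl
  have hD : ∑ v, (Q.degree v : ℤ) = 2 * (Q.edgeFinset.card : ℤ) := by
    have hinst : ∑ v : V, Q.degree v
        = ∑ v : V, @SimpleGraph.degree V Q v (Q.neighborSetFintype v) :=
      Finset.sum_congr rfl fun v _ => by congr 1 <;> exact Subsingleton.elim _ _
    have h0 : ∑ v : V, Q.degree v = 2 * Q.edgeFinset.card := by
      rw [hinst, show Q.edgeFinset = @SimpleGraph.edgeFinset V Q Q.fintypeEdgeSet by
        congr 1 <;> exact Subsingleton.elim _ _]
      exact Q.sum_degrees_eq_twice_card_edges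
    exact_mod_cast congrArg (Nat.cast : ℕ → ℤ) h0
  have hM2 : (zagrebM2 Q : ℤ)
      = ∑ e ∈ Q.edgeFinset,
          Sym2.lift ⟨fun u v => (Q.degree u : ℤ) * (Q.degree v : ℤ),
            fun u v => mul_comm _ _⟩ e := by
    rw [zagrebM2, Nat.cast_sum, m2_lift_cast]
  have hS1 : ∑ e ∈ Q.edgeFinset, dsum Q e = (zagrebM1 Q : ℤ) := by
    rw [sum_dsum, hM1]
  have hS2 : ∑ e ∈ Q.edgeFinset, (dsum Q e)^2
      = (forgottenF Q : ℤ) + 2 * (zagrebM2 Q : ℤ) := by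
    rw [sum_dsum_sq, hF, hM2]
  have hmain : (zagrebM1 (genTransMinus Q r s p q) : ℤ)
      = ∑ x : (Fin r × V) ⊕ (Fin s × Q.edgeSet),
          (((genTransMinus Q r s p q).degree x : ℤ))^2 := by
    rw [zagrebM1]; push_cast; rfl
  rw [hmain, Fintype.sum_sum_type, Fintype.sum_prod_type, Fintype.sum_prod_type]
  have hL : ∑ g : Fin r, ∑ α : V,
      (((genTransMinus Q r s p q).degree (Sum.inl (g,α)) : ℤ))^2
      = (p : ℤ) * (∑ α : V, ((1 - (s:ℤ)) * (Q.degree α : ℤ)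
            + (s:ℤ) * (Q.edgeFinset.card : ℤ))^2)
        + ((r:ℤ) - p) * (∑ α : V, ((-(s:ℤ) - 1) * (Q.degree α : ℤ)
            + ((Fintype.card V : ℤ) - 1 + (s:ℤ) * (Q.edgeFinset.card : ℤ)))^2) := by
    rw [← fin_sum_ite r p hpr]
    refine Finset.sum_congr rfl fun g _ => ?_
    by_cases hg : (g : ℕ) < p
    · rw [if_pos hg]
      exact Finset.sum_congr rfl fun α _ => by rw [degree_inl_lt_z Q hg]
    · rw [if_neg hg]
      exact Finset.sum_congr rfl fun α _ => by rw [degree_inl_ge_z Q hg]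
  have hR : ∑ h : Fin s, ∑ e : Q.edgeSet,
      (((genTransMinus Q r s p q).degree (Sum.inr (h,e)) : ℤ))^2
      = (q : ℤ) * (∑ e ∈ Q.edgeFinset, (1 * dsum Q e
            + ((r:ℤ) * ((Fintype.card V : ℤ) - 2) - 2))^2)
        + ((s:ℤ) - q) * (∑ e ∈ Q.edgeFinset, ((-1) * dsum Q e
            + ((Q.edgeFinset.card : ℤ) + 1 + (r:ℤ) * ((Fintype.card V : ℤ) - 2)))^2) := by
    rw [← fin_sum_ite s q hqs]
    refine Finset.sum_congr rfl fun h _ => ?_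
    by_cases hh : (h : ℕ) < q
    · rw [if_pos hh]
      trans (∑ e : Q.edgeSet, (1 * dsum Q (e : Sym2 V)
          + ((r:ℤ) * ((Fintype.card V : ℤ) - 2) - 2))^2)
      · exact Finset.sum_congr rfl fun e _ => by rw [degree_inr_lt_z Q hh e]
      · exact Finset.sum_set_coe (f := fun x : Sym2 V => (1 * dsum Q x
          + ((r:ℤ) * ((Fintype.card V : ℤ) - 2) - 2))^2) _
    · rw [if_neg hh]
      trans (∑ e : Q.edgeSet, ((-1) * dsum Q (e : Sym2 V)
          + ((Q.edgeFinset.card : ℤ) + 1 + (r:ℤ) * ((Fintype.card V : ℤ) - 2)))^2)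
      · exact Finset.sum_congr rfl fun e _ => by rw [degree_inr_ge_z Q hh e]
      · exact Finset.sum_set_coe (f := fun x : Sym2 V => ((-1) * dsum Q x
          + ((Q.edgeFinset.card : ℤ) + 1 + (r:ℤ) * ((Fintype.card V : ℤ) - 2)))^2) _
  rw [hL, hR, sum_affine_sq, sum_affine_sq, sum_affine_sq_edge, sum_affine_sq_edge,
    hD, hS1, hS2, ← hM1]
  ring
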